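/- arXiv:0803.1942 — 10 statements merged into one kernel-verified Lean document; each statement's English description precedes it below -/
import Mathlib

section
/- Let α > 0 and let γ₁,…,γ_p, η₁,…,η_p be nonnegative reals with γ_i < α for all i. Define τ = min_{i≤p} η_i/(α−γ_i). Then for every L > 0 and every δ > 0 there exists M > 0 such that for all natural numbers n ≥ 1 and all u ≥ 0: L·(∑_{i≤p} n^{−η_i} u^{γ_i}) ≤ δ·u^α + M·n^{−ατ}. -/
/-!
Each term is balanced against `u ^ α` by the weighted AM-GM inequality with weights
`θ = γ / α` and `1 - θ`: with `s = L n ^ (-η)` one has `s u ^ γ = (u ^ α) ^ θ * y ^ (1 - θ)`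
for `y = s ^ (α / (α - γ))`, so `s u ^ γ ≤ ε u ^ α + C y`, and `y` is a constant times
`n ^ (-η α / (α - γ)) ≤ n ^ (-α τ)` by the choice of `τ`. Summing over the `p + 1` terms with
`ε = δ / (p + 1)` gives the bound.
-/

open Finset

namespace Real

theorem rpow_mul_rpow_one_sub_le {θ ε x y : ℝ} (hθ0 : 0 ≤ θ) (hθ1 : θ < 1) (hε : 0 < ε)
    (hx : 0 ≤ x) (hy : 0 ≤ y) :
    x ^ θ * y ^ (1 - θ) ≤ ε * x + ε ^ (-(θ / (1 - θ))) * y := by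
  have h1θ : 0 < 1 - θ := sub_pos.mpr hθ1
  set K := ε ^ (-(θ / (1 - θ)))
  have hK : 0 < K := rpow_pos_of_pos hε _
  -- `ε ^ θ * K ^ (1 - θ) = 1`, so rescaling `x` by `ε` and `y` by `K` leaves the product unchanged
  have hscale : ε ^ θ * K ^ (1 - θ) = 1 := by
    rw [← rpow_mul hε.le, ← rpow_add hε]
    convert rpow_zero ε using 2
    field_simp
    ring
  have amgm := geom_mean_le_arith_mean2_weighted hθ0 h1θ.le (mul_nonneg hε.le hx)
    (mul_nonneg hK.le hy) (by ring)
  rw [mul_rpow hε.le hx, mul_rpow hK.le hy,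
    show ε ^ θ * x ^ θ * (K ^ (1 - θ) * y ^ (1 - θ))
      = ε ^ θ * K ^ (1 - θ) * (x ^ θ * y ^ (1 - θ)) by ring, hscale, one_mul] at amgm
  linarith [mul_nonneg h1θ.le (mul_nonneg hε.le hx), mul_nonneg hθ0 (mul_nonneg hK.le hy)]

theorem mul_rpow_le_add {α γ δ s u : ℝ} (hα : 0 < α) (hγ0 : 0 ≤ γ) (hγα : γ < α)
    (hδ : 0 < δ) (hs : 0 ≤ s) (hu : 0 ≤ u) :
    s * u ^ γ ≤ δ * u ^ α + δ ^ (-(γ / (α - γ))) * s ^ (α / (α - γ)) := by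
  have hαγ : 0 < α - γ := sub_pos.mpr hγα
  have hθ : γ / α / (1 - γ / α) = γ / (α - γ) := by field_simp
  have key := rpow_mul_rpow_one_sub_le (div_nonneg hγ0 hα.le) ((div_lt_one hα).mpr hγα) hδ
    (rpow_nonneg hu α) (rpow_nonneg hs (α / (α - γ)))
  rwa [hθ, ← rpow_mul hu, ← rpow_mul hs, mul_div_cancel₀ _ hα.ne',
    show α / (α - γ) * (1 - γ / α) = 1 by field_simp, rpow_one, mul_comm (u ^ γ)] at key

end Real

theorem mul_rpow_neg_mul_rpow_le {α γ η τ L δ u : ℝ} (hα : 0 < α) (hγ0 : 0 ≤ γ) (hγα : γ < α)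
    (hτ : τ ≤ η / (α - γ)) (hL : 0 ≤ L) (hδ : 0 < δ) {n : ℕ} (hn : 1 ≤ n) (hu : 0 ≤ u) :
    L * ((n : ℝ) ^ (-η) * u ^ γ) ≤
      δ * u ^ α + δ ^ (-(γ / (α - γ))) * L ^ (α / (α - γ)) * (n : ℝ) ^ (-(α * τ)) := by
  have hαγ : 0 < α - γ := sub_pos.mpr hγα
  have hn1 : (1 : ℝ) ≤ n := by exact_mod_cast hn
  have hn0 : (0 : ℝ) ≤ n := by positivity
  have hdecay : ((n : ℝ) ^ (-η)) ^ (α / (α - γ)) ≤ (n : ℝ) ^ (-(α * τ)) := by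
    rw [← Real.rpow_mul hn0]
    refine Real.rpow_le_rpow_of_exponent_le hn1 ?_
    have := mul_le_mul_of_nonneg_left hτ hα.le
    rw [neg_mul, neg_le_neg_iff]
    linarith [show α * (η / (α - γ)) = η * (α / (α - γ)) by ring]
  calc L * ((n : ℝ) ^ (-η) * u ^ γ) = (L * (n : ℝ) ^ (-η)) * u ^ γ := by ring
    _ ≤ δ * u ^ α + δ ^ (-(γ / (α - γ))) * (L * (n : ℝ) ^ (-η)) ^ (α / (α - γ)) :=
      Real.mul_rpow_le_add hα hγ0 hγα hδ (by positivity) hu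
    _ ≤ δ * u ^ α + δ ^ (-(γ / (α - γ))) * L ^ (α / (α - γ)) * (n : ℝ) ^ (-(α * τ)) := by
      rw [Real.mul_rpow hL (by positivity), ← mul_assoc]
      gcongr

theorem stmt_0_general (p : ℕ) (α : ℝ) (hα : 0 < α)
    (γ η : Fin (p + 1) → ℝ)
    (hγ0 : ∀ i, 0 ≤ γ i) (hγα : ∀ i, γ i < α)
    (τ : ℝ) (hτ : τ = (Finset.univ.inf' Finset.univ_nonempty fun i => η i / (α - γ i))) :
    ∀ L > (0 : ℝ), ∀ δ > (0 : ℝ), ∃ M > (0 : ℝ), ∀ n : ℕ, 1 ≤ n → ∀ u : ℝ, 0 ≤ u →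
      L * (∑ i, (n : ℝ) ^ (-η i) * u ^ (γ i)) ≤ δ * u ^ α + M * (n : ℝ) ^ (-(α * τ)) := by
  intro L hL δ hδ
  set ε := δ / (p + 1 : ℝ)
  have hε : 0 < ε := by positivity
  set M : Fin (p + 1) → ℝ := fun i => ε ^ (-(γ i / (α - γ i))) * L ^ (α / (α - γ i))
  have hτi : ∀ i, τ ≤ η i / (α - γ i) := fun i => hτ ▸ inf'_le _ (mem_univ i)
  refine ⟨∑ i, M i, sum_pos (fun i _ => by positivity) univ_nonempty, fun n hn u hu => ?_⟩
  calc L * ∑ i, (n : ℝ) ^ (-η i) * u ^ γ i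
      ≤ ∑ i, (ε * u ^ α + M i * (n : ℝ) ^ (-(α * τ))) := by
        rw [mul_sum]
        exact sum_le_sum fun i _ =>
          mul_rpow_neg_mul_rpow_le hα (hγ0 i) (hγα i) (hτi i) hL.le hε hn hu
    _ = δ * u ^ α + (∑ i, M i) * (n : ℝ) ^ (-(α * τ)) := by
        rw [sum_add_distrib, sum_const, card_univ, Fintype.card_fin, nsmul_eq_mul, ← sum_mul,
          ← mul_assoc, Nat.cast_add_one, mul_div_cancel₀ _ (by positivity)]

/-- Deterministic core of Lemma 3: for α > 0 and nonnegative exponents γᵢ < α, ηᵢ,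
with τ = minᵢ ηᵢ/(α−γᵢ), for every L > 0 and δ > 0 there is M > 0 such that
L·∑ᵢ n^{−ηᵢ} u^{γᵢ} ≤ δ·u^α + M·n^{−ατ} for all n ≥ 1 and u ≥ 0. -/
theorem stmt_0 (p : ℕ) (α : ℝ) (hα : 0 < α)
    (γ η : Fin (p + 1) → ℝ)
    (hγ0 : ∀ i, 0 ≤ γ i) (hη0 : ∀ i, 0 ≤ η i) (hγα : ∀ i, γ i < α)
    (τ : ℝ) (hτ : τ = (Finset.univ.inf' Finset.univ_nonempty fun i => η i / (α - γ i))) :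
    ∀ L > (0 : ℝ), ∀ δ > (0 : ℝ), ∃ M > (0 : ℝ), ∀ n : ℕ, 1 ≤ n → ∀ u : ℝ, 0 ≤ u →
      L * (∑ i, (n : ℝ) ^ (-η i) * u ^ (γ i)) ≤ δ * u ^ α + M * (n : ℝ) ^ (-(α * τ)) :=
  stmt_0_general p α hα γ η hγ0 hγα τ hτ
end

section
/- Let G_n : ℝ^{d₁} × ℝ^{d₂} → ℝ be deterministic functions and (a_n, b_n) points with G_n(a_n, b_n) ≤ G_n(0,0) and ‖(a_n, b_n)‖ → 0. Let α ≥ β > 0, and γ₁,…,γ_p, η₁,…,η_p ≥ 0 with γ_i < α. Suppose G_n(a,b) − G_n(0,0) = M_n(a,b) − N_n(a,b), where for all large n, M_n(a_n, b_n) ≥ c₀(‖a_n‖^α + ‖b_n‖^β) for a fixed c₀ > 0, and max(N_n(a_n, b_n), 0) ≤ C·∑_{i≤p} n^{−η_i} ‖(a_n, b_n)‖^{γ_i} for a fixed C > 0. Define τ_a = min_{i≤p} η_i/(α−γ_i). Then there is a constant K such that for all large n, ‖a_n‖ ≤ K n^{−τ_a} and ‖b_n‖ ≤ K n^{−ατ_a/β}.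 -/
/-!
Put `r = ‖(aₙ, bₙ)‖` and `u = r nᶿ` with `θ = τ_a`. Since `θ (α - γᵢ) ≤ ηᵢ`, every term
`n^{-ηᵢ} r^{γᵢ}` is at most `n^{-αθ} u^{γᵢ}`, while `rᵅ = n^{-αθ} uᵅ` (and `rᵅ ≤ ‖aₙ‖ᵅ + ‖bₙ‖ᵝ`
once `r ≤ 1`). Hence `c₀ uᵅ ≤ C ∑ u^{γᵢ}`, and as every `γᵢ < α` this bounds `u` by a constant `U`:
this gives the rate for `aₙ`. Feeding `r ≤ U n^{-θ}` back into the upper bound gives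
`c₀ ‖bₙ‖ᵝ ≤ C n^{-αθ} ∑ U^{γᵢ}`, the rate for `bₙ`.
-/

open Filter Finset

lemma rpow_norm_le_add_rpow_norm {E F : Type*} [SeminormedAddCommGroup E]
    [SeminormedAddCommGroup F] {α β : ℝ} (hβ : 0 < β) (hβα : β ≤ α) {x : E × F}
    (hx : ‖x‖ ≤ 1) : ‖x‖ ^ α ≤ ‖x.1‖ ^ α + ‖x.2‖ ^ β := by
  have h₁ : 0 ≤ ‖x.1‖ ^ α := Real.rpow_nonneg (norm_nonneg _) _
  have h₂ : 0 ≤ ‖x.2‖ ^ β := Real.rpow_nonneg (norm_nonneg _) _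
  rcases max_cases ‖x.1‖ ‖x.2‖ with ⟨hmax, -⟩ | ⟨hmax, -⟩ <;> rw [Prod.norm_def, hmax] at hx ⊢
  · linarith
  · linarith [Real.rpow_le_rpow_of_exponent_ge' (norm_nonneg _) hx hβ.le hβα]

lemma le_of_mul_rpow_le_sum_rpow {ι : Type*} [Fintype ι] [Nonempty ι] {α c C u : ℝ}
    {γ : ι → ℝ} (hc : 0 < c) (hC : 0 ≤ C) (hγ : ∀ i, γ i < α)
    (h : c * u ^ α ≤ C * ∑ i, u ^ γ i) :
    u ≤ max 1 ((Fintype.card ι * C / c) ^ (α - univ.sup' univ_nonempty γ)⁻¹) := by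
  set Γ := univ.sup' univ_nonempty γ
  rcases le_or_gt u 1 with hu1 | hu1
  · exact le_max_of_le_left hu1
  refine le_max_of_le_right ?_
  have hu : 0 < u := one_pos.trans hu1
  have hΓ : 0 < α - Γ := sub_pos.2 ((sup'_lt_iff _).2 fun i _ => hγ i)
  have hsum : ∑ i, u ^ γ i ≤ Fintype.card ι * u ^ Γ := by
    calc ∑ i, u ^ γ i ≤ ∑ _i : ι, u ^ Γ :=
          sum_le_sum fun i _ => Real.rpow_le_rpow_of_exponent_le hu1.le (le_sup' γ (mem_univ i))
      _ = Fintype.card ι * u ^ Γ := by simp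
  have hpow : u ^ (α - Γ) ≤ Fintype.card ι * C / c := by
    rw [le_div_iff₀ hc, Real.rpow_sub hu, div_mul_eq_mul_div, div_le_iff₀ (by positivity)]
    nlinarith [mul_le_mul_of_nonneg_left hsum hC]
  exact (Real.le_rpow_inv_iff_of_pos hu.le ((Real.rpow_nonneg hu.le _).trans hpow) hΓ).2 hpow

section Scaling

variable {ι : Type*} [Fintype ι] {n α θ : ℝ} {γ η : ι → ℝ}

lemma sum_rpow_neg_mul_rpow_le {u : ℝ} (hn : 1 ≤ n) (hu : 0 ≤ u)
    (hθ : ∀ i, θ * (α - γ i) ≤ η i) :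
    ∑ i, n ^ (-η i) * (u * n ^ (-θ)) ^ γ i ≤ n ^ (-(α * θ)) * ∑ i, u ^ γ i := by
  have hn0 : 0 < n := one_pos.trans_le hn
  rw [mul_sum]
  refine sum_le_sum fun i _ => ?_
  rw [Real.mul_rpow hu (Real.rpow_nonneg hn0.le _), ← Real.rpow_mul hn0.le,
    mul_left_comm, ← Real.rpow_add hn0, mul_comm]
  gcongr
  linarith [hθ i]

lemma le_mul_rpow_neg_of_mul_rpow_le_sum [Nonempty ι] {r c C : ℝ} (hn : 1 ≤ n) (hr : 0 ≤ r)
    (hc : 0 < c) (hC : 0 ≤ C) (hγ : ∀ i, γ i < α) (hθ : ∀ i, θ * (α - γ i) ≤ η i)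
    (h : c * r ^ α ≤ C * ∑ i, n ^ (-η i) * r ^ γ i) :
    r ≤ max 1 ((Fintype.card ι * C / c) ^ (α - univ.sup' univ_nonempty γ)⁻¹) * n ^ (-θ) := by
  have hn0 : 0 < n := one_pos.trans_le hn
  set u := r * n ^ θ
  have hru : r = u * n ^ (-θ) := by
    rw [mul_assoc, ← Real.rpow_add hn0, add_neg_cancel, Real.rpow_zero, mul_one]
  have hu : 0 ≤ u := mul_nonneg hr (Real.rpow_nonneg hn0.le _)
  suffices c * u ^ α ≤ C * ∑ i, u ^ γ i by
    rw [hru]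
    exact mul_le_mul_of_nonneg_right (le_of_mul_rpow_le_sum_rpow hc hC hγ this)
      (Real.rpow_nonneg hn0.le _)
  have hscaled : n ^ (-(α * θ)) * (c * u ^ α) ≤ n ^ (-(α * θ)) * (C * ∑ i, u ^ γ i) := by
    calc n ^ (-(α * θ)) * (c * u ^ α) = c * r ^ α := by
          rw [hru, Real.mul_rpow hu (Real.rpow_nonneg hn0.le _), ← Real.rpow_mul hn0.le]
          ring_nf
      _ ≤ C * ∑ i, n ^ (-η i) * r ^ γ i := h
      _ ≤ C * (n ^ (-(α * θ)) * ∑ i, u ^ γ i) :=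
          mul_le_mul_of_nonneg_left (hru ▸ sum_rpow_neg_mul_rpow_le hn hu hθ) hC
      _ = n ^ (-(α * θ)) * (C * ∑ i, u ^ γ i) := by ring
  exact le_of_mul_le_mul_left hscaled (Real.rpow_pos_of_pos hn0 _)

end Scaling

lemma le_mul_rpow_of_rpow_le_mul_rpow {x L n s β : ℝ} (hx : 0 ≤ x) (hn : 0 < n) (hβ : 0 < β)
    (h : x ^ β ≤ L * n ^ (-s)) : x ≤ L ^ β⁻¹ * n ^ (-(s / β)) := by
  have hL : 0 ≤ L := nonneg_of_mul_nonneg_left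
    ((Real.rpow_nonneg hx _).trans h) (Real.rpow_pos_of_pos hn _)
  refine (Real.le_rpow_inv_iff_of_pos hx ((Real.rpow_nonneg hx _).trans h) hβ).2 h |>.trans_eq ?_
  rw [Real.mul_rpow hL (Real.rpow_nonneg hn.le _), ← Real.rpow_mul hn.le, neg_mul, div_eq_mul_inv]
theorem stmt_5_general (d₁ d₂ p : ℕ) (α β : ℝ) (hβ : 0 < β) (hαβ : β ≤ α)
    (γ η : Fin (p + 1) → ℝ)
    (hγ0 : ∀ i, 0 ≤ γ i) (hγα : ∀ i, γ i < α)
    (G M N : ℕ → EuclideanSpace ℝ (Fin d₁) × EuclideanSpace ℝ (Fin d₂) → ℝ)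
    (a : ℕ → EuclideanSpace ℝ (Fin d₁)) (b : ℕ → EuclideanSpace ℝ (Fin d₂))
    (hle : ∀ n, G n (a n, b n) ≤ G n (0, 0))
    (htend : Tendsto (fun n => ‖(a n, b n)‖) atTop (nhds 0))
    (hdec : ∀ n x, G n x - G n (0, 0) = M n x - N n x)
    (c₀ : ℝ) (hc₀ : 0 < c₀)
    (hM : ∀ᶠ n in atTop, c₀ * (‖a n‖ ^ α + ‖b n‖ ^ β) ≤ M n (a n, b n))
    (C : ℝ) (hC : 0 < C)
    (hN : ∀ᶠ n in atTop,
      max (N n (a n, b n)) 0 ≤ C * ∑ i, (n : ℝ) ^ (-η i) * ‖(a n, b n)‖ ^ (γ i))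
    (τa : ℝ) (hτa : τa = (Finset.univ.inf' Finset.univ_nonempty fun i => η i / (α - γ i))) :
    ∃ K : ℝ, ∀ᶠ n in atTop,
      ‖a n‖ ≤ K * (n : ℝ) ^ (-τa) ∧ ‖b n‖ ≤ K * (n : ℝ) ^ (-(α * τa / β)) := by
  have hτ : ∀ i, τa * (α - γ i) ≤ η i := fun i =>
    (le_div_iff₀ (sub_pos.2 (hγα i))).1 (hτa ▸ inf'_le _ (mem_univ i))
  set U := max 1 ((Fintype.card (Fin (p + 1)) * C / c₀) ^ (α - univ.sup' univ_nonempty γ)⁻¹)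
  set L := C * (∑ i, U ^ γ i) / c₀
  refine ⟨max U (L ^ β⁻¹), ?_⟩
  filter_upwards [hM, hN, htend.eventually (eventually_le_nhds one_pos), eventually_ge_atTop 1]
    with n hMn hNn hr1 hn1
  have hn : (1 : ℝ) ≤ n := by exact_mod_cast hn1
  have hn0 : (0 : ℝ) < n := one_pos.trans_le hn
  set r := ‖(a n, b n)‖
  have hMN : M n (a n, b n) ≤ max (N n (a n, b n)) 0 :=
    le_max_of_le_left (by linarith [hdec n (a n, b n), hle n])
  have hbound : c₀ * (‖a n‖ ^ α + ‖b n‖ ^ β) ≤ C * ∑ i, (n : ℝ) ^ (-η i) * r ^ γ i :=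
    hMn.trans (hMN.trans hNn)
  have hrU : r ≤ U * (n : ℝ) ^ (-τa) :=
    le_mul_rpow_neg_of_mul_rpow_le_sum hn (norm_nonneg _) hc₀ hC.le hγα hτ <|
      (mul_le_mul_of_nonneg_left (rpow_norm_le_add_rpow_norm hβ hαβ hr1) hc₀.le).trans hbound
  have hsum : ∑ i, (n : ℝ) ^ (-η i) * r ^ γ i ≤ (n : ℝ) ^ (-(α * τa)) * ∑ i, U ^ γ i :=
    (sum_le_sum fun i _ => by gcongr; exact hγ0 i).trans
      (sum_rpow_neg_mul_rpow_le hn (zero_le_one.trans (le_max_left _ _)) hτ)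
  have hb : ‖b n‖ ^ β ≤ L * (n : ℝ) ^ (-(α * τa)) := by
    rw [div_mul_eq_mul_div, le_div_iff₀ hc₀]
    nlinarith [mul_le_mul_of_nonneg_left hsum hC.le, Real.rpow_nonneg (norm_nonneg (a n)) α]
  constructor
  · exact (norm_fst_le _).trans (hrU.trans (by gcongr; exact le_max_left _ _))
  · exact (le_mul_rpow_of_rpow_le_mul_rpow (norm_nonneg _) hn0 hβ hb).trans
      (by gcongr; exact le_max_right _ _)

/-- Deterministic version of Lemma 1 (rates of convergence for two-component minimizers):
with G_n(a_n,b_n) ≤ G_n(0,0), ‖(a_n,b_n)‖ → 0, the decomposition G_n − G_n(0,0) = M_n − N_n,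
a lower bound M_n(a_n,b_n) ≥ c₀(‖a_n‖^α + ‖b_n‖^β) and a polynomial upper bound on (N_n)⁺,
one gets ‖a_n‖ ≤ K n^{−τ_a} and ‖b_n‖ ≤ K n^{−ατ_a/β} eventually, where
τ_a = minᵢ ηᵢ/(α−γᵢ). -/
theorem stmt_5 (d₁ d₂ p : ℕ) (α β : ℝ) (hβ : 0 < β) (hαβ : β ≤ α)
    (γ η : Fin (p + 1) → ℝ)
    (hγ0 : ∀ i, 0 ≤ γ i) (hη0 : ∀ i, 0 ≤ η i) (hγα : ∀ i, γ i < α)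
    (G M N : ℕ → EuclideanSpace ℝ (Fin d₁) × EuclideanSpace ℝ (Fin d₂) → ℝ)
    (a : ℕ → EuclideanSpace ℝ (Fin d₁)) (b : ℕ → EuclideanSpace ℝ (Fin d₂))
    (hle : ∀ n, G n (a n, b n) ≤ G n (0, 0))
    (htend : Tendsto (fun n => ‖(a n, b n)‖) atTop (nhds 0))
    (hdec : ∀ n x, G n x - G n (0, 0) = M n x - N n x)
    (c₀ : ℝ) (hc₀ : 0 < c₀)
    (hM : ∀ᶠ n in atTop, c₀ * (‖a n‖ ^ α + ‖b n‖ ^ β) ≤ M n (a n, b n))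
    (C : ℝ) (hC : 0 < C)
    (hN : ∀ᶠ n in atTop,
      max (N n (a n, b n)) 0 ≤ C * ∑ i, (n : ℝ) ^ (-η i) * ‖(a n, b n)‖ ^ (γ i))
    (τa : ℝ) (hτa : τa = (Finset.univ.inf' Finset.univ_nonempty fun i => η i / (α - γ i))) :
    ∃ K : ℝ, ∀ᶠ n in atTop,
      ‖a n‖ ≤ K * (n : ℝ) ^ (-τa) ∧ ‖b n‖ ≤ K * (n : ℝ) ^ (-(α * τa / β)) :=
  stmt_5_general d₁ d₂ p α β hβ hαβ γ η hγ0 hγα G M N a b hle htend hdec c₀ hc₀ hM C hC hN τa hτa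
end

section
/- Let A be an abstract set, G_n : A × ℝ^{d₂} → ℝ, and (a_n, b_n) ∈ A × ℝ^{d₂} with G_n(a_n, b_n) ≤ G_n(a_n, 0) and ‖b_n‖ → 0. Let β > 0 and α₁,…,α_p ≥ 0, β₁,…,β_p ≥ 0 with β_i < β. Suppose G_n(a,b) − G_n(a,0) = M_n(a,b) − N_n(a,b) with, for all large n, M_n(a_n, b_n) ≥ c₀‖b_n‖^β for some fixed c₀ > 0 and max(N_n(a_n,b_n),0) ≤ C·∑_{i≤p} n^{−α_i}‖b_n‖^{β_i} for some fixed C > 0. Then ‖b_n‖ ≤ K n^{−τ_b} for τ_b = min_{i≤p} α_i/(β−β_i) and some constant K. Moreover, if N_n(a_n,b_n) ≤ 0 for all large n, then b_n = 0 for all large n. -/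
/-!
Comparing `G_n(a_n, b_n)` with `G_n(a_n, 0)` gives `M_n ≤ N_n` at `(a_n, b_n)`, hence
`c₀ ‖b_n‖^β ≤ C ∑ᵢ n^{-αᵢ} ‖b_n‖^{βᵢ}`. The sum is at most `p + 1` times its largest term, say
the `j`-th, and dividing by `‖b_n‖^{βⱼ}` leaves `‖b_n‖^{β-βⱼ} ≲ n^{-αⱼ}`, i.e.
`‖b_n‖ ≲ n^{-αⱼ/(β-βⱼ)} ≤ n^{-τ_b}`. If moreover `N_n ≤ 0`, then `c₀ ‖b_n‖^β ≤ 0` forces `b_n = 0`.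
-/

open Filter Finset

lemma le_mul_rpow_of_rpow_le_mul_rpow_s6 {x L t α β β' : ℝ} (hx : 0 < x) (hL : 0 ≤ L) (ht : 0 ≤ t)
    (hβ' : β' < β) (h : x ^ β ≤ L * t ^ (-α) * x ^ β') :
    x ≤ L ^ (β - β')⁻¹ * t ^ (-(α / (β - β'))) := by
  have hγ : 0 < β - β' := sub_pos.mpr hβ'
  have hdiv : x ^ (β - β') ≤ L * t ^ (-α) := by
    rwa [Real.rpow_sub hx, div_le_iff₀ (Real.rpow_pos_of_pos hx _)]
  calc x ≤ (L * t ^ (-α)) ^ (β - β')⁻¹ :=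
        (Real.le_rpow_inv_iff_of_pos hx.le (by positivity) hγ).mpr hdiv
    _ = L ^ (β - β')⁻¹ * t ^ (-(α / (β - β'))) := by
        rw [Real.mul_rpow hL (Real.rpow_nonneg ht _), ← Real.rpow_mul ht, neg_mul, div_eq_mul_inv]

theorem exists_rate_of_rpow_le_sum {ι : Type*} [Fintype ι] [Nonempty ι] {α β' : ι → ℝ}
    {β c C τ : ℝ} (hβ' : ∀ i, β' i < β) (hc : 0 < c) (hC : 0 ≤ C)
    (hτ : ∀ i, τ ≤ α i / (β - β' i)) :
    ∃ K, ∀ x t : ℝ, 0 ≤ x → 1 ≤ t → c * x ^ β ≤ C * ∑ i, t ^ (-α i) * x ^ β' i →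
      x ≤ K * t ^ (-τ) := by
  set L := C * Fintype.card ι / c
  have hL : 0 ≤ L := by positivity
  set K := univ.sup' univ_nonempty fun i => L ^ (β - β' i)⁻¹
  have hK : 0 ≤ K := (Real.rpow_nonneg hL _).trans
    (le_sup' (fun i => L ^ (β - β' i)⁻¹) (mem_univ (Classical.arbitrary ι)))
  refine ⟨K, fun x t hx ht h => ?_⟩
  have ht0 : 0 ≤ t := zero_le_one.trans ht
  rcases hx.eq_or_lt with rfl | hx
  · positivity
  obtain ⟨j, -, hj⟩ := exists_max_image univ (fun i => t ^ (-α i) * x ^ β' i) univ_nonempty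
  have hsum : ∑ i, t ^ (-α i) * x ^ β' i ≤ Fintype.card ι * (t ^ (-α j) * x ^ β' j) := by
    simpa using sum_le_card_nsmul univ _ _ hj
  have hmax : x ^ β ≤ L * t ^ (-α j) * x ^ β' j := by
    rw [mul_assoc, div_mul_eq_mul_div, le_div_iff₀ hc, mul_assoc, mul_comm _ c]
    linarith [mul_le_mul_of_nonneg_left hsum hC]
  calc x ≤ L ^ (β - β' j)⁻¹ * t ^ (-(α j / (β - β' j))) :=
        le_mul_rpow_of_rpow_le_mul_rpow_s6 hx hL ht0 (hβ' j) hmax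
    _ ≤ K * t ^ (-τ) := by
        gcongr
        · exact le_sup' (fun i => L ^ (β - β' i)⁻¹) (mem_univ j)
        · exact hτ j

theorem stmt_6_general (A : Type*) (d₂ p : ℕ) (β : ℝ)
    (αe βe : Fin (p + 1) → ℝ)
    (hβe : ∀ i, βe i < β)
    (G M N : ℕ → A × EuclideanSpace ℝ (Fin d₂) → ℝ)
    (a : ℕ → A) (b : ℕ → EuclideanSpace ℝ (Fin d₂))
    (hle : ∀ n, G n (a n, b n) ≤ G n (a n, 0))
    (hdec : ∀ n x, G n x - G n (x.1, 0) = M n x - N n x)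
    (c₀ : ℝ) (hc₀ : 0 < c₀)
    (hM : ∀ᶠ n in atTop, c₀ * ‖b n‖ ^ β ≤ M n (a n, b n))
    (C : ℝ) (hC : 0 < C)
    (hN : ∀ᶠ n in atTop,
      max (N n (a n, b n)) 0 ≤ C * ∑ i, (n : ℝ) ^ (-αe i) * ‖b n‖ ^ (βe i))
    (τb : ℝ) (hτb : τb = (Finset.univ.inf' Finset.univ_nonempty fun i => αe i / (β - βe i))) :
    (∃ K : ℝ, ∀ᶠ n in atTop, ‖b n‖ ≤ K * (n : ℝ) ^ (-τb)) ∧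
      ((∀ᶠ n in atTop, N n (a n, b n) ≤ 0) → ∀ᶠ n in atTop, b n = 0) := by
  have hMN : ∀ n, M n (a n, b n) ≤ N n (a n, b n) := fun n => by
    linarith [hle n, hdec n (a n, b n)]
  constructor
  · have hτ : ∀ i, τb ≤ αe i / (β - βe i) := hτb ▸ fun i => inf'_le _ (mem_univ i)
    obtain ⟨K, hK⟩ := exists_rate_of_rpow_le_sum hβe hc₀ hC.le hτ
    refine ⟨K, ?_⟩
    filter_upwards [hM, hN, eventually_ge_atTop 1] with n hMn hNn hn
    exact hK _ _ (norm_nonneg _) (by exact_mod_cast hn)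
      (hMn.trans ((hMN n).trans ((le_max_left _ _).trans hNn)))
  · intro hN0
    filter_upwards [hM, hN0] with n hMn hNn
    by_contra hb
    have : 0 < c₀ * ‖b n‖ ^ β := by positivity
    linarith [hMN n]

/-- Deterministic version of Theorem 2 (rate of the faster component): the a-component
lives in an abstract set A; from G_n(a_n,b_n) ≤ G_n(a_n,0), ‖b_n‖ → 0, the decomposition
G_n(a,b) − G_n(a,0) = M_n(a,b) − N_n(a,b) with M_n(a_n,b_n) ≥ c₀‖b_n‖^β and
(N_n(a_n,b_n))⁺ ≤ C ∑ᵢ n^{−αᵢ}‖b_n‖^{βᵢ}, one gets ‖b_n‖ ≤ K n^{−τ_b} eventually,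
where τ_b = minᵢ αᵢ/(β−βᵢ); and if N_n(a_n,b_n) ≤ 0 eventually, then b_n = 0 eventually. -/
theorem stmt_6 (A : Type*) (d₂ p : ℕ) (β : ℝ) (hβ : 0 < β)
    (αe βe : Fin (p + 1) → ℝ)
    (hαe : ∀ i, 0 ≤ αe i) (hβe0 : ∀ i, 0 ≤ βe i) (hβe : ∀ i, βe i < β)
    (G M N : ℕ → A × EuclideanSpace ℝ (Fin d₂) → ℝ)
    (a : ℕ → A) (b : ℕ → EuclideanSpace ℝ (Fin d₂))
    (hle : ∀ n, G n (a n, b n) ≤ G n (a n, 0))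
    (htend : Tendsto (fun n => ‖b n‖) atTop (nhds 0))
    (hdec : ∀ n x, G n x - G n (x.1, 0) = M n x - N n x)
    (c₀ : ℝ) (hc₀ : 0 < c₀)
    (hM : ∀ᶠ n in atTop, c₀ * ‖b n‖ ^ β ≤ M n (a n, b n))
    (C : ℝ) (hC : 0 < C)
    (hN : ∀ᶠ n in atTop,
      max (N n (a n, b n)) 0 ≤ C * ∑ i, (n : ℝ) ^ (-αe i) * ‖b n‖ ^ (βe i))
    (τb : ℝ) (hτb : τb = (Finset.univ.inf' Finset.univ_nonempty fun i => αe i / (β - βe i))) :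
    (∃ K : ℝ, ∀ᶠ n in atTop, ‖b n‖ ≤ K * (n : ℝ) ^ (-τb)) ∧
      ((∀ᶠ n in atTop, N n (a n, b n) ≤ 0) → ∀ᶠ n in atTop, b n = 0) :=
  stmt_6_general A d₂ p β αe βe hβe G M N a b hle hdec c₀ hc₀ hM C hC hN τb hτb
end

section
/- Consider G_n(a,b) = (a,b)C_n(a,b)' − 2n^{−1/2}(a,b)·Z_n + (λ₀/2)n^{−1/2}a(1+r_n(a)) + λ₀ n^{−1/2}|b|^{1/2} on ℝ², where C_n are symmetric 2×2 matrices whose smallest eigenvalues are bounded below by c > 0 for all large n, Z_n ∈ ℝ² with ‖Z_n‖ ≤ L bounded, λ₀ > 0, and r_n(a) → 0 uniformly as a → 0. If (a_n, b_n) minimizes G_n with (a_n,b_n) → 0, and G_n(a_n,b_n) ≤ G_n(0,0) = 0, then there is a constant K with ‖(a_n,b_n)‖ ≤ K n^{−1/2} for all large n. -/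
/-!
The minimizer beats the origin: `G_n(a_n, b_n) ≤ 0`. The quadratic part is at least
`c‖x‖²`, the penalty `λ₀ n^{-1/2}|b|^{1/2}` is nonnegative, and the remaining terms are
linear in `x = (a_n, b_n)` with coefficient `O(n^{-1/2})` once `|r_n(a_n)| ≤ 1`, which holds
for large `n` because `a_n → 0`. Hence `c‖x‖² ≤ (4L + λ₀) n^{-1/2} ‖x‖`, i.e. the case
`α = β = 2` of the rate lemma.
-/

open Filter Matrix

section SupNorm

variable {ι : Type*} [Fintype ι]

theorem sq_norm_le_dotProduct_self (x : ι → ℝ) : ‖x‖ ^ 2 ≤ x ⬝ᵥ x := by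
  have hsum : 0 ≤ x ⬝ᵥ x := Finset.sum_nonneg fun i _ => mul_self_nonneg (x i)
  have hcoord : ∀ i, ‖x i‖ ≤ √(x ⬝ᵥ x) := fun i =>
    Real.abs_le_sqrt <| by
      simpa only [sq, dotProduct] using
        Finset.single_le_sum (fun j _ => mul_self_nonneg (x j)) (Finset.mem_univ i)
  exact (Real.le_sqrt (norm_nonneg x) hsum).1 ((pi_norm_le_iff_of_nonneg (by positivity)).2 hcoord)

theorem abs_dotProduct_le (x y : ι → ℝ) : |x ⬝ᵥ y| ≤ Fintype.card ι * (‖x‖ * ‖y‖) := by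
  calc |x ⬝ᵥ y| ≤ ∑ i, |x i * y i| := Finset.abs_sum_le_sum_abs _ _
    _ ≤ ∑ _i : ι, ‖x‖ * ‖y‖ := Finset.sum_le_sum fun i _ => by
        rw [abs_mul]
        exact mul_le_mul (norm_le_pi_norm x i) (norm_le_pi_norm y i) (abs_nonneg _)
          (norm_nonneg x)
    _ = Fintype.card ι * (‖x‖ * ‖y‖) := by
        rw [Finset.sum_const, Finset.card_univ, nsmul_eq_mul]

end SupNorm

theorem norm_le_div_of_quadratic_add_linear_nonpos {E : Type*} [SeminormedAddCommGroup E]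
    {x : E} {c B q N P : ℝ} (hc : 0 < c) (hB : 0 ≤ B) (hq : c * ‖x‖ ^ 2 ≤ q)
    (hN : |N| ≤ B * ‖x‖) (hP : 0 ≤ P) (h : q + N + P ≤ 0) : ‖x‖ ≤ B / c := by
  have hsq : c * ‖x‖ * ‖x‖ ≤ B * ‖x‖ := by
    nlinarith only [hq, hN, hP, h, neg_abs_le N]
  rw [le_div_iff₀ hc]
  rcases (norm_nonneg x).eq_or_lt with hx | hx
  · rw [← hx, zero_mul]
    exact hB
  · linarith only [le_of_mul_le_mul_right hsq hx]

theorem abs_lasso_linear_term_le {s L lam ρ : ℝ} {x Z : Fin 2 → ℝ} (hs : 0 ≤ s)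
    (hlam : 0 ≤ lam) (hZ : ‖Z‖ ≤ L) (hρ : |ρ| ≤ 1) :
    |-(2 * s * (x ⬝ᵥ Z)) + lam / 2 * s * x 0 * (1 + ρ)| ≤ (4 * L + lam) * s * ‖x‖ := by
  have hdot : |x ⬝ᵥ Z| ≤ 2 * (‖x‖ * L) := by
    simpa only [Fintype.card_fin, Nat.cast_ofNat] using
      (abs_dotProduct_le x Z).trans
        (mul_le_mul_of_nonneg_left (mul_le_mul_of_nonneg_left hZ (norm_nonneg x)) zero_le_two)
  have hx0 : |x 0| ≤ ‖x‖ := norm_le_pi_norm x 0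
  have hfactor : |1 + ρ| ≤ 2 := by
    linarith only [abs_add_le 1 ρ, abs_one (α := ℝ), hρ]
  calc |-(2 * s * (x ⬝ᵥ Z)) + lam / 2 * s * x 0 * (1 + ρ)|
      ≤ 2 * s * |x ⬝ᵥ Z| + lam / 2 * s * (|x 0| * |1 + ρ|) := by
        refine (abs_add_le _ _).trans (le_of_eq ?_)
        rw [abs_neg, abs_mul, abs_mul, abs_mul, abs_mul, abs_mul, abs_of_nonneg hs,
          abs_of_nonneg (div_nonneg hlam zero_le_two), abs_two]
        ring
    _ ≤ 2 * s * (2 * (‖x‖ * L)) + lam / 2 * s * (‖x‖ * 2) := by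
        gcongr
    _ = (4 * L + lam) * s * ‖x‖ := by ring

theorem stmt_8_general (Cn : ℕ → Matrix (Fin 2) (Fin 2) ℝ)
    (c : ℝ) (hc : 0 < c)
    (heig : ∀ᶠ n in atTop, ∀ x : Fin 2 → ℝ, c * (x ⬝ᵥ x) ≤ x ⬝ᵥ (Cn n).mulVec x)
    (Z : ℕ → Fin 2 → ℝ) (L : ℝ) (hZ : ∀ n i, |Z n i| ≤ L)
    (lam : ℝ) (hlam : 0 < lam)
    (r : ℕ → ℝ → ℝ)
    (hr : ∀ ε > (0 : ℝ), ∃ δ > (0 : ℝ), ∀ n : ℕ, ∀ a : ℝ, |a| < δ → |r n a| < ε)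
    (G : ℕ → ℝ × ℝ → ℝ)
    (hG : ∀ n : ℕ, ∀ a b : ℝ, G n (a, b) =
      (![a, b] ⬝ᵥ (Cn n).mulVec ![a, b])
        - 2 * (n : ℝ) ^ (-(1/2 : ℝ)) * (![a, b] ⬝ᵥ Z n)
        + (lam / 2) * (n : ℝ) ^ (-(1/2 : ℝ)) * a * (1 + r n a)
        + lam * (n : ℝ) ^ (-(1/2 : ℝ)) * |b| ^ (1/2 : ℝ))
    (an bn : ℕ → ℝ)
    (htend : Tendsto (fun n => (an n, bn n)) atTop (nhds (0, 0)))
    (hle : ∀ n, G n (an n, bn n) ≤ G n (0, 0)) :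
    ∃ K : ℝ, ∀ᶠ n in atTop, ‖(an n, bn n)‖ ≤ K * (n : ℝ) ^ (-(1/2 : ℝ)) := by
  obtain ⟨δ, hδ, hrδ⟩ := hr 1 one_pos
  have hsmall : ∀ᶠ n in atTop, |an n| < δ := by
    simpa only [Real.dist_eq, sub_zero] using
      (htend.fst_nhds.eventually (Metric.ball_mem_nhds 0 hδ))
  have hL : 0 ≤ L := (abs_nonneg _).trans (hZ 0 0)
  refine ⟨(4 * L + lam) / c, ?_⟩
  filter_upwards [heig, hsmall] with n hquad ha
  have hG0 : G n (0, 0) = 0 := by simp [hG]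
  have hbasic := hG0 ▸ hle n
  rw [hG] at hbasic
  set x : Fin 2 → ℝ := ![an n, bn n]
  set s : ℝ := (n : ℝ) ^ (-(1/2 : ℝ))
  have hs : 0 ≤ s := by positivity
  have hZn : ‖Z n‖ ≤ L := (pi_norm_le_iff_of_nonneg hL).2 (hZ n)
  have hrate := norm_le_div_of_quadratic_add_linear_nonpos (P := lam * s * |bn n| ^ (1/2 : ℝ))
    hc (by positivity)
    ((mul_le_mul_of_nonneg_left (sq_norm_le_dotProduct_self x) hc.le).trans (hquad x))
    (abs_lasso_linear_term_le hs hlam.le hZn (hrδ n (an n) ha).le) (by positivity)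
    (by rw [show x 0 = an n from rfl]; linarith only [hbasic])
  calc ‖(an n, bn n)‖ ≤ ‖x‖ := max_le (norm_le_pi_norm x 0) (norm_le_pi_norm x 1)
    _ ≤ (4 * L + lam) * s / c := hrate
    _ = (4 * L + lam) / c * s := by ring

/-- Deterministic rate-of-convergence step for the Lasso example (Section 5, γ = 1/2):
with G_n(a,b) = (a,b)C_n(a,b)' − 2n^{−1/2}(a,b)·Z_n + (λ₀/2)n^{−1/2}a(1+r_n(a))
+ λ₀ n^{−1/2}|b|^{1/2}, C_n symmetric with quadratic form bounded below by c‖·‖²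
for large n, Z_n bounded, r_n(a) → 0 uniformly as a → 0, a minimizer (a_n,b_n) → 0
with G_n(a_n,b_n) ≤ G_n(0,0) satisfies ‖(a_n,b_n)‖ ≤ K n^{−1/2} for all large n. -/
theorem stmt_8 (Cn : ℕ → Matrix (Fin 2) (Fin 2) ℝ) (hsymm : ∀ n, (Cn n).IsSymm)
    (c : ℝ) (hc : 0 < c)
    (heig : ∀ᶠ n in atTop, ∀ x : Fin 2 → ℝ, c * (x ⬝ᵥ x) ≤ x ⬝ᵥ (Cn n).mulVec x)
    (Z : ℕ → Fin 2 → ℝ) (L : ℝ) (hZ : ∀ n i, |Z n i| ≤ L)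
    (lam : ℝ) (hlam : 0 < lam)
    (r : ℕ → ℝ → ℝ)
    (hr : ∀ ε > (0 : ℝ), ∃ δ > (0 : ℝ), ∀ n : ℕ, ∀ a : ℝ, |a| < δ → |r n a| < ε)
    (G : ℕ → ℝ × ℝ → ℝ)
    (hG : ∀ n : ℕ, ∀ a b : ℝ, G n (a, b) =
      (![a, b] ⬝ᵥ (Cn n).mulVec ![a, b])
        - 2 * (n : ℝ) ^ (-(1/2 : ℝ)) * (![a, b] ⬝ᵥ Z n)
        + (lam / 2) * (n : ℝ) ^ (-(1/2 : ℝ)) * a * (1 + r n a)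
        + lam * (n : ℝ) ^ (-(1/2 : ℝ)) * |b| ^ (1/2 : ℝ))
    (an bn : ℕ → ℝ)
    (hmin : ∀ n : ℕ, ∀ x : ℝ × ℝ, G n (an n, bn n) ≤ G n x)
    (htend : Tendsto (fun n => (an n, bn n)) atTop (nhds (0, 0)))
    (hle : ∀ n, G n (an n, bn n) ≤ G n (0, 0)) :
    ∃ K : ℝ, ∀ᶠ n in atTop, ‖(an n, bn n)‖ ≤ K * (n : ℝ) ^ (-(1/2 : ℝ)) :=
  stmt_8_general Cn c hc heig Z L hZ lam hlam r hr G hG an bn htend hle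
end

section
/- Let v > 0, λ₀ > 0, and suppose real sequences (a_n, b_n) satisfy b_n → 0 and, for a constant C, the function values satisfy 0 ≥ G_n(a_n,b_n) − G_n(a_n,0) where G_n(a_n,b) − G_n(a_n,0) = v b² − R_n(b) + λ₀ n^{−1/2}|b|^{1/2} with |R_n(b_n)| ≤ C n^{−1/2}|b_n| for all large n. Then b_n = 0 for all large n. -/
open Filter

/-! Near `0` the penalty `λ p |x|^{1/2}` dominates any linear remainder `C p |x|`, because
`|x|^{1/2}` dominates `|x|`; together with `v x² ≥ 0` this makes the minimality inequality
impossible unless `x = 0`. Since `bₙ → 0`, the smallness condition `C |bₙ|^{1/2} < λ` holds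
eventually. -/

lemma eq_zero_of_penalty_le_remainder {v lam p C x r : ℝ} (hv : 0 ≤ v) (hp : 0 < p)
    (hle : v * x ^ 2 - r + lam * p * |x| ^ (1/2 : ℝ) ≤ 0) (hr : r ≤ C * p * |x|)
    (hsmall : C * |x| ^ (1/2 : ℝ) < lam) : x = 0 := by
  by_contra hx
  set s := |x| ^ (1/2 : ℝ)
  have hs : 0 < s := Real.rpow_pos_of_pos (abs_pos.mpr hx) _
  have habs : |x| = s * s := by
    rw [← Real.rpow_add (abs_pos.mpr hx)]
    norm_num
  rw [habs] at hr
  nlinarith [mul_nonneg hv (sq_nonneg x), mul_pos (mul_pos hp hs) (sub_pos.mpr hsmall)]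

/-- Sparsity conclusion of the Lasso example (Section 5): if b_n → 0 and
0 ≥ G_n(a_n,b_n) − G_n(a_n,0) = v b_n² − R_n(b_n) + λ₀ n^{−1/2}|b_n|^{1/2} with
|R_n(b_n)| ≤ C n^{−1/2}|b_n| for all large n, then b_n = 0 for all large n. -/
theorem stmt_9 (v lam : ℝ) (hv : 0 < v) (hlam : 0 < lam)
    (b : ℕ → ℝ) (htend : Tendsto b atTop (nhds 0))
    (C : ℝ) (R : ℕ → ℝ → ℝ)
    (hle : ∀ᶠ n in atTop,
      v * (b n) ^ 2 - R n (b n) + lam * (n : ℝ) ^ (-(1/2 : ℝ)) * |b n| ^ (1/2 : ℝ) ≤ 0)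
    (hR : ∀ᶠ n in atTop, |R n (b n)| ≤ C * (n : ℝ) ^ (-(1/2 : ℝ)) * |b n|) :
    ∀ᶠ n in atTop, b n = 0 := by
  have hsmall : ∀ᶠ n in atTop, C * |b n| ^ (1/2 : ℝ) < lam := by
    have hlim : Tendsto (fun n => C * |b n| ^ (1/2 : ℝ)) atTop (nhds 0) := by
      simpa using (htend.abs.rpow_const (Or.inr one_half_pos.le)).const_mul C
    exact hlim.eventually (gt_mem_nhds hlam)
  filter_upwards [hle, hR, hsmall, eventually_gt_atTop 0] with n hle hR hsmall hn
  exact eq_zero_of_penalty_le_remainder hv.le (Real.rpow_pos_of_pos (Nat.cast_pos.mpr hn) _)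
    hle ((le_abs_self _).trans hR) hsmall
end

section
/- Let P be a probability distribution on ℝ with a density bounded by B. For R > 0, define the envelope G_R(x) = sup{ |1[(μ+ε)−(ρ+δ), (μ+ε)+(ρ+δ)](x) − 1[μ−(ρ+δ), μ+(ρ+δ)](x)| : ε² + δ² ≤ R² }. Then P G_R² ≤ 8BR for all R ≤ ρ. -/
/-!
The symmetric difference of `[a, b]` and `[a', b']` lies in `[[a, a']] ∪ [[b, b']]`. For
`|ε|, |δ| ≤ R` the left endpoints stay within `2R` of `m - ρ` and the right ones within `2R` of
`m + ρ`, so every difference of indicators in the envelope, hence `G_R²`, is dominated by the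
indicator of `S = B̄(m - ρ, 2R) ∪ B̄(m + ρ, 2R)`. As the density is at most `B`,
`P G_R² ≤ P S ≤ B · vol S ≤ 8BR`.
-/

open MeasureTheory Set Metric
open scoped symmDiff

theorem Set.Icc_symmDiff_Icc_subset {α : Type*} [LinearOrder α] (a b a' b' : α) :
    Icc a b ∆ Icc a' b' ⊆ uIcc a a' ∪ uIcc b b' := by
  intro x hx
  simp only [mem_symmDiff, mem_Icc, mem_union, mem_uIcc, not_and_or, not_le] at hx ⊢
  grind

theorem Real.uIcc_subset_closedBall {a a' c r : ℝ} (ha : |a - c| ≤ r) (ha' : |a' - c| ≤ r) :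
    uIcc a a' ⊆ closedBall c r := by
  rw [Real.closedBall_eq_Icc]
  exact ordConnected_Icc.uIcc_subset (by rw [mem_Icc]; constructor <;> linarith [abs_le.1 ha])
    (by rw [mem_Icc]; constructor <;> linarith [abs_le.1 ha'])

theorem shifted_Icc_symmDiff_subset {m ρ R ε δ : ℝ} (hε : |ε| ≤ R) (hδ : |δ| ≤ R) :
    Icc (m + ε - (ρ + δ)) (m + ε + (ρ + δ)) ∆ Icc (m - (ρ + δ)) (m + (ρ + δ)) ⊆
      closedBall (m - ρ) (2 * R) ∪ closedBall (m + ρ) (2 * R) := by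
  refine (Icc_symmDiff_Icc_subset _ _ _ _).trans (union_subset_union ?_ ?_) <;>
    apply Real.uIcc_subset_closedBall <;> ring_nf <;> try rw [abs_neg]
  all_goals linarith [abs_sub ε δ, abs_add_le ε δ, abs_nonneg δ]

theorem volume_closedBall_union_closedBall_le (c d : ℝ) {r : ℝ} (hr : 0 ≤ r) :
    volume (closedBall c r ∪ closedBall d r) ≤ ENNReal.ofReal (4 * r) := by
  calc volume (closedBall c r ∪ closedBall d r)
      ≤ volume (closedBall c r) + volume (closedBall d r) := measure_union_le _ _
    _ = ENNReal.ofReal (4 * r) := by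
      rw [Real.volume_closedBall, Real.volume_closedBall,
        ← ENNReal.ofReal_add (by positivity) (by positivity)]
      ring_nf

theorem withDensity_ofReal_le_smul {α : Type*} [MeasurableSpace α] (μ : Measure α)
    {f : α → ℝ} {B : ℝ} (hfB : ∀ x, f x ≤ B) :
    μ.withDensity (fun x => ENNReal.ofReal (f x)) ≤ ENNReal.ofReal B • μ := by
  rw [← withDensity_const]
  exact withDensity_mono (Filter.Eventually.of_forall fun x => ENNReal.ofReal_le_ofReal (hfB x))

theorem abs_indicator_sub_indicator_le {α : Type*} {s t u : Set α} (h : s ∆ t ⊆ u) {f : α → ℝ}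
    (hf : 0 ≤ f) (x : α) : |s.indicator f x - t.indicator f x| ≤ u.indicator f x := by
  rw [← abs_indicator_symmDiff, abs_of_nonneg (indicator_nonneg (fun y _ => hf y) x)]
  exact indicator_le_indicator_of_subset h hf x

theorem csSup_mem_Icc_of_mem {α : Type*} [ConditionallyCompleteLattice α] {V : Set α} {a c : α}
    (ha : a ∈ V) (hc : ∀ v ∈ V, v ≤ c) : sSup V ∈ Icc a c :=
  ⟨le_csSup ⟨c, hc⟩ ha, csSup_le ⟨a, ha⟩ hc⟩

theorem stmt_11_general (f : ℝ → ℝ) (B : ℝ) (hf0 : ∀ x, 0 ≤ f x) (hfB : ∀ x, f x ≤ B)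
    (P : Measure ℝ) (hP : P = volume.withDensity (fun x => ENNReal.ofReal (f x)))
    (m ρ : ℝ) (R : ℝ) (hR : 0 < R)
    (GR : ℝ → ℝ)
    (hGR : ∀ x : ℝ, GR x = sSup {v : ℝ | ∃ ε δ : ℝ, ε ^ 2 + δ ^ 2 ≤ R ^ 2 ∧
      v = |(Set.Icc (m + ε - (ρ + δ)) (m + ε + (ρ + δ))).indicator (fun _ => (1 : ℝ)) x
            - (Set.Icc (m - (ρ + δ)) (m + (ρ + δ))).indicator (fun _ => (1 : ℝ)) x|}) :
    ∫ x, (GR x) ^ 2 ∂P ≤ 8 * B * R := by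
  set S := closedBall (m - ρ) (2 * R) ∪ closedBall (m + ρ) (2 * R)
  have hS : MeasurableSet S := measurableSet_closedBall.union measurableSet_closedBall
  have hB : 0 ≤ B := (hf0 0).trans (hfB 0)
  have hGR_le : ∀ x, GR x ^ 2 ≤ S.indicator 1 x := by
    intro x
    obtain ⟨hG0, hGS⟩ : 0 ≤ GR x ∧ GR x ≤ S.indicator 1 x := by
      rw [hGR x]
      refine csSup_mem_Icc_of_mem ?_ ?_
      · exact ⟨0, 0, by simpa using sq_nonneg R, by simp⟩
      rintro v ⟨ε, δ, hεδ, rfl⟩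
      have hε := abs_le_of_sq_le_sq (by nlinarith : ε ^ 2 ≤ R ^ 2) hR.le
      have hδ := abs_le_of_sq_le_sq (by nlinarith : δ ^ 2 ≤ R ^ 2) hR.le
      exact abs_indicator_sub_indicator_le (shifted_Icc_symmDiff_subset hε hδ) zero_le_one x
    have hS1 : S.indicator (1 : ℝ → ℝ) x ≤ 1 := indicator_le_self' (fun _ _ => zero_le_one) x
    nlinarith
  have hPS : P S ≤ ENNReal.ofReal (8 * B * R) :=
    calc P S ≤ ENNReal.ofReal B * volume S := hP ▸ withDensity_ofReal_le_smul volume hfB S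
      _ ≤ ENNReal.ofReal B * ENNReal.ofReal (4 * (2 * R)) := by
        gcongr; exact volume_closedBall_union_closedBall_le _ _ (by positivity)
      _ = ENNReal.ofReal (8 * B * R) := by rw [← ENNReal.ofReal_mul hB]; ring_nf
  have hint : Integrable (S.indicator 1) P :=
    (integrable_indicator_iff hS).2
      (integrableOn_const (C := (1 : ℝ)) (hPS.trans_lt ENNReal.ofReal_lt_top).ne)
  calc ∫ x, GR x ^ 2 ∂P ≤ ∫ x, S.indicator 1 x ∂P :=
        integral_mono_of_nonneg (ae_of_all _ fun x => sq_nonneg _) hint (ae_of_all _ hGR_le)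
    _ = P.real S := integral_indicator_one hS
    _ ≤ 8 * B * R := ENNReal.toReal_le_of_le_ofReal (by positivity) hPS

/-- Envelope bound from the shorth example (Section 6): if P has density bounded by B,
and G_R is the envelope of the differences of the indicators of [(m+ε)±(ρ+δ)] and
[m±(ρ+δ)] over ε²+δ² ≤ R², then P G_R² ≤ 8BR for 0 < R ≤ ρ. -/
theorem stmt_11 (f : ℝ → ℝ) (B : ℝ) (hf0 : ∀ x, 0 ≤ f x) (hfB : ∀ x, f x ≤ B)
    (P : Measure ℝ) (hP : P = volume.withDensity (fun x => ENNReal.ofReal (f x)))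
    [IsProbabilityMeasure P]
    (m ρ : ℝ) (hρ : 0 < ρ) (R : ℝ) (hR : 0 < R) (hRρ : R ≤ ρ)
    (GR : ℝ → ℝ)
    (hGR : ∀ x : ℝ, GR x = sSup {v : ℝ | ∃ ε δ : ℝ, ε ^ 2 + δ ^ 2 ≤ R ^ 2 ∧
      v = |(Set.Icc (m + ε - (ρ + δ)) (m + ε + (ρ + δ))).indicator (fun _ => (1 : ℝ)) x
            - (Set.Icc (m - (ρ + δ)) (m + (ρ + δ))).indicator (fun _ => (1 : ℝ)) x|}) :
    ∫ x, (GR x) ^ 2 ∂P ≤ 8 * B * R :=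
  stmt_11_general f B hf0 hfB P hP m ρ R hR GR hGR
end

section
/- Let P be a probability measure on ℝ with bounded density, and suppose the interval [μ−ρ, μ+ρ] is the unique shortest interval with P-measure at least 1/2, with ρ > 0. Assume the population coverage function V(ε,δ) = P[(μ+ε)−(ρ+δ), (μ+ε)+(ρ+δ)] − 1/2 admits the expansion V(ε,δ) = c₁δ + c₂ε² + c₃εδ + c₄δ² + o(ε²+δ²) with c₁ > 0 and c₂ < 0. Then there exists a positive constant c such that for all sufficiently small δ > 0, sup_m P[m − (ρ−δ), m + (ρ−δ)] < 1/2 − cδ. -/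
/-!
A bounded density makes the coverage `x ↦ P[x - ρ, x + ρ]` Lipschitz in the center; it tends
to `0` at infinity, and by uniqueness of the shorth it is `< 1/2` for `x ≠ m`. Hence it stays
below some `s < 1/2` on `{|x - m| ≥ γ}`, and shrinking the radius only lowers it. For centers
within `γ` of `m`, the expansion at `(ε, -δ)` gives
`V ε (-δ) ≤ -c₁ δ + |c₃| |ε| δ + (|c₄| - c₂) δ² ≤ -c₁ δ / 2`.
-/

open MeasureTheory ProbabilityTheory Set Filter Topology
open scoped NNReal ENNReal

lemma withDensity_ofReal_le_smul_volume {f : ℝ → ℝ} {B : ℝ} (hfB : ∀ x, f x ≤ B) :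
    volume.withDensity (fun x => ENNReal.ofReal (f x)) ≤ (B.toNNReal : ℝ≥0∞) • volume := by
  rw [← withDensity_const]
  exact withDensity_mono (Eventually.of_forall fun x => ENNReal.ofReal_le_ofReal (hfB x))

section BoundedDensity

variable {μ : Measure ℝ} {K : ℝ≥0}

lemma measureReal_Icc_le_of_le_smul_volume (hμ : μ ≤ (K : ℝ≥0∞) • volume) {a b : ℝ}
    (hab : a ≤ b) : μ.real (Icc a b) ≤ K * (b - a) := by
  refine ENNReal.toReal_le_of_le_ofReal (by positivity) ?_
  calc μ (Icc a b) ≤ ((K : ℝ≥0∞) • volume) (Icc a b) := hμ _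
    _ = ENNReal.ofReal (K * (b - a)) := by
      rw [Measure.smul_apply, Real.volume_Icc, smul_eq_mul, ENNReal.ofReal_mul K.coe_nonneg,
        ENNReal.ofReal_coe_nnreal]

lemma lipschitzWith_measureReal_Icc_center [IsFiniteMeasure μ]
    (hμ : μ ≤ (K : ℝ≥0∞) • volume) (r : ℝ) :
    LipschitzWith K (fun x => μ.real (Icc (x - r) (x + r))) := by
  refine LipschitzWith.of_le_add_mul K fun x y => ?_
  rcases le_total x y with hxy | hyx
  · calc μ.real (Icc (x - r) (x + r))
        ≤ μ.real (Icc (x - r) (y - r) ∪ Icc (y - r) (y + r)) :=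
          measureReal_mono (Icc_subset_Icc_union_Icc.trans
            (union_subset_union_right _ (Icc_subset_Icc_right (by linarith))))
      _ ≤ μ.real (Icc (x - r) (y - r)) + μ.real (Icc (y - r) (y + r)) := measureReal_union_le _ _
      _ ≤ K * (y - x) + μ.real (Icc (y - r) (y + r)) := by
          gcongr
          exact (measureReal_Icc_le_of_le_smul_volume hμ (by linarith)).trans_eq (by ring)
      _ = μ.real (Icc (y - r) (y + r)) + K * dist x y := by
          rw [Real.dist_eq, abs_of_nonpos (by linarith)]; ring
  · calc μ.real (Icc (x - r) (x + r))
        ≤ μ.real (Icc (y - r) (y + r) ∪ Icc (y + r) (x + r)) :=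
          measureReal_mono (Icc_subset_Icc_union_Icc.trans
            (union_subset_union_left _ (Icc_subset_Icc_left (by linarith))))
      _ ≤ μ.real (Icc (y - r) (y + r)) + μ.real (Icc (y + r) (x + r)) := measureReal_union_le _ _
      _ ≤ μ.real (Icc (y - r) (y + r)) + K * (x - y) := by
          gcongr
          exact (measureReal_Icc_le_of_le_smul_volume hμ (by linarith)).trans_eq (by ring)
      _ = μ.real (Icc (y - r) (y + r)) + K * dist x y := by
          rw [Real.dist_eq, abs_of_nonneg (by linarith)]

end BoundedDensity

lemma measureReal_Ioc_eq_cdf_sub (μ : Measure ℝ) [IsProbabilityMeasure μ] {a b : ℝ}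
    (hab : a ≤ b) : μ.real (Ioc a b) = cdf μ b - cdf μ a := by
  have h := (cdf μ).measure_Ioc a b
  rw [measure_cdf] at h
  rw [measureReal_def, h, ENNReal.toReal_ofReal (sub_nonneg.2 (monotone_cdf μ hab))]

lemma tendsto_measureReal_Icc_cocompact (μ : Measure ℝ) [IsProbabilityMeasure μ] {r : ℝ}
    (hr : 0 ≤ r) : Tendsto (fun x => μ.real (Icc (x - r) (x + r))) (cocompact ℝ) (𝓝 0) := by
  have hbound : ∀ x, μ.real (Icc (x - r) (x + r)) ≤ cdf μ (x + r) - cdf μ (x - (r + 1)) :=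
    fun x => calc
      μ.real (Icc (x - r) (x + r)) ≤ μ.real (Ioc (x - (r + 1)) (x + r)) :=
        measureReal_mono ((Icc_subset_Ioc_iff (by linarith)).2 ⟨by linarith, le_rfl⟩)
      _ = cdf μ (x + r) - cdf μ (x - (r + 1)) := measureReal_Ioc_eq_cdf_sub μ (by linarith)
  have hsqueeze : ∀ l : Filter ℝ, Tendsto (· + r) l l → Tendsto (· - (r + 1)) l l →
      ∀ c, Tendsto (cdf μ) l (𝓝 c) → Tendsto (fun x => μ.real (Icc (x - r) (x + r))) l (𝓝 0) :=
    fun l hadd hsub c hc => tendsto_of_tendsto_of_tendsto_of_le_of_le tendsto_const_nhds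
      (by simpa using (hc.comp hadd).sub (hc.comp hsub)) (fun _ => measureReal_nonneg) hbound
  rw [cocompact_eq_atBot_atTop, tendsto_sup]
  exact ⟨hsqueeze _ (tendsto_atBot_add_const_right _ _ tendsto_id)
      (tendsto_atBot_add_const_right _ _ tendsto_id) 0 (tendsto_cdf_atBot μ),
    hsqueeze _ (tendsto_atTop_add_const_right _ _ tendsto_id)
      (tendsto_atTop_add_const_right _ _ tendsto_id) 1 (tendsto_cdf_atTop μ)⟩

theorem IsClosed.exists_lt_forall_le_of_tendsto_cocompact {X : Type*} [TopologicalSpace X]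
    {f : X → ℝ} (hf : Continuous f) {S : Set X} (hS : IsClosed S) {a L : ℝ}
    (hlim : Tendsto f (cocompact X) (𝓝 a)) (ha : a < L) (hlt : ∀ x ∈ S, f x < L) :
    ∃ s < L, ∀ x ∈ S, f x ≤ s := by
  obtain ⟨b, hab, hbL⟩ := exists_between ha
  obtain ⟨K, hK, hKc⟩ := mem_cocompact.1 (hlim (Iio_mem_nhds hab))
  rcases (K ∩ S).eq_empty_or_nonempty with hempty | hne
  · refine ⟨b, hbL, fun x hx => (hKc fun hxK => ?_).le⟩
    exact hempty.subset ⟨hxK, hx⟩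
  obtain ⟨x₀, hx₀, hmax⟩ := (hK.inter_right hS).exists_isMaxOn hne hf.continuousOn
  refine ⟨max (f x₀) b, max_lt (hlt x₀ hx₀.2) hbL, fun x hx => ?_⟩
  by_cases hxK : x ∈ K
  · exact (hmax ⟨hxK, hx⟩).trans (le_max_left _ _)
  · exact (hKc hxK).le.trans (le_max_right _ _)

theorem exists_forall_le_neg_of_expansion {V rem : ℝ → ℝ → ℝ} {c₁ c₂ c₃ c₄ : ℝ}
    (hc₁ : 0 < c₁) (hc₂ : c₂ < 0)
    (hV : ∀ ε δ : ℝ, V ε δ = c₁ * δ + c₂ * ε ^ 2 + c₃ * ε * δ + c₄ * δ ^ 2 + rem ε δ)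
    (ho : ∀ η > (0 : ℝ), ∃ r > (0 : ℝ), ∀ ε δ : ℝ,
      ε ^ 2 + δ ^ 2 < r → |rem ε δ| ≤ η * (ε ^ 2 + δ ^ 2)) :
    ∃ γ > (0 : ℝ), ∃ δ₁ > (0 : ℝ), ∀ ε δ : ℝ, |ε| < γ → 0 < δ → δ < δ₁ →
      V ε (-δ) ≤ -(c₁ / 2) * δ := by
  -- with `η = -c₂` the remainder swallows the curvature term `c₂ ε²`, leaving only `δ²`
  obtain ⟨r, hr, hrem⟩ := ho (-c₂) (neg_pos.2 hc₂)
  have hC : 0 < |c₄| - c₂ + 1 := by linarith [abs_nonneg c₄]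
  refine ⟨min 1 (min (r / 2) (c₁ / (4 * (|c₃| + 1)))), by positivity,
    min 1 (min (r / 2) (c₁ / (4 * (|c₄| - c₂ + 1)))), by positivity,
    fun ε δ hε hδ hδ₁ => ?_⟩
  simp only [lt_min_iff] at hε hδ₁
  obtain ⟨hε1, hεr, hεc⟩ := hε
  obtain ⟨hδ1, hδr, hδc⟩ := hδ₁
  have hsmall : ε ^ 2 + (-δ) ^ 2 < r := by
    have : ε ^ 2 ≤ |ε| := by rw [← sq_abs]; nlinarith [abs_nonneg ε]
    nlinarith
  have hR : rem ε (-δ) ≤ -c₂ * (ε ^ 2 + δ ^ 2) := by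
    simpa using (abs_le.1 (hrem ε (-δ) hsmall)).2
  have hcross : -(c₃ * ε * δ) ≤ c₁ / 4 * δ := by
    have : |c₃| * |ε| ≤ c₁ / 4 := by
      rw [lt_div_iff₀ (by positivity)] at hεc
      nlinarith [abs_nonneg c₃, abs_nonneg ε]
    nlinarith [neg_abs_le (c₃ * ε), abs_mul c₃ ε]
  have hquad : (|c₄| - c₂) * δ ^ 2 ≤ c₁ / 4 * δ := by
    rw [lt_div_iff₀ (by positivity)] at hδc
    nlinarith [abs_nonneg c₄]
  have hc₄ : c₄ * δ ^ 2 ≤ |c₄| * δ ^ 2 := by gcongr; exact le_abs_self c₄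
  rw [hV]
  linarith

theorem stmt_12_general (f : ℝ → ℝ) (B : ℝ) (hfB : ∀ x, f x ≤ B)
    (P : Measure ℝ) (hP : P = volume.withDensity (fun x => ENNReal.ofReal (f x)))
    [IsProbabilityMeasure P]
    (m ρ : ℝ) (hρ : 0 < ρ)
    (huniq : ∀ c r : ℝ, 0 ≤ r → ENNReal.ofReal (1 / 2) ≤ P (Set.Icc (c - r) (c + r)) →
      ρ ≤ r ∧ (r = ρ → c = m))
    (V : ℝ → ℝ → ℝ)
    (hVdef : ∀ ε δ : ℝ,
      V ε δ = (P (Set.Icc (m + ε - (ρ + δ)) (m + ε + (ρ + δ)))).toReal - 1 / 2)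
    (c₁ c₂ c₃ c₄ : ℝ) (hc₁ : 0 < c₁) (hc₂ : c₂ < 0)
    (rem : ℝ → ℝ → ℝ)
    (hV : ∀ ε δ : ℝ, V ε δ = c₁ * δ + c₂ * ε ^ 2 + c₃ * ε * δ + c₄ * δ ^ 2 + rem ε δ)
    (ho : ∀ η > (0 : ℝ), ∃ r > (0 : ℝ), ∀ ε δ : ℝ,
      ε ^ 2 + δ ^ 2 < r → |rem ε δ| ≤ η * (ε ^ 2 + δ ^ 2)) :
    ∃ c > (0 : ℝ), ∃ δ₀ > (0 : ℝ), ∀ δ : ℝ, 0 < δ → δ < δ₀ →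
      ∀ m' : ℝ, (P (Set.Icc (m' - (ρ - δ)) (m' + (ρ - δ)))).toReal < 1 / 2 - c * δ := by
  obtain ⟨γ, hγ, δ₁, hδ₁, hnear⟩ := exists_forall_le_neg_of_expansion hc₁ hc₂ hV ho
  have hcover_lt : ∀ x, γ ≤ |x - m| → P.real (Icc (x - ρ) (x + ρ)) < 1 / 2 := by
    intro x hx
    by_contra! hge
    have hxm := (huniq x ρ hρ.le (ENNReal.ofReal_le_of_le_toReal hge)).2 rfl
    rw [hxm, sub_self, abs_zero] at hx
    linarith
  obtain ⟨s, hs, hfar⟩ := (isClosed_le continuous_const (continuous_abs.comp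
      (continuous_sub_right m))).exists_lt_forall_le_of_tendsto_cocompact
    (lipschitzWith_measureReal_Icc_center (hP ▸ withDensity_ofReal_le_smul_volume hfB) ρ).continuous
    (tendsto_measureReal_Icc_cocompact P hρ.le) (by norm_num) hcover_lt
  refine ⟨c₁ / 4, by positivity, min δ₁ ((1 / 2 - s) / c₁), lt_min hδ₁ (by
    have := sub_pos.2 hs; positivity), fun δ hδ hδ₀ m' => ?_⟩
  rw [lt_min_iff, lt_div_iff₀ hc₁] at hδ₀
  rcases lt_or_ge |m' - m| γ with hm' | hm'
  · have h := hnear (m' - m) δ hm' hδ hδ₀.1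
    rw [hVdef, show m + (m' - m) - (ρ + -δ) = m' - (ρ - δ) by ring,
      show m + (m' - m) + (ρ + -δ) = m' + (ρ - δ) by ring] at h
    linarith [mul_pos hc₁ hδ]
  · have h : P.real (Icc (m' - (ρ - δ)) (m' + (ρ - δ))) ≤ P.real (Icc (m' - ρ) (m' + ρ)) :=
      measureReal_mono (Icc_subset_Icc (by linarith) (by linarith))
    change P.real _ < _
    linarith [hfar m' hm', mul_pos hc₁ hδ]

/-- Separation inequality from the shorth example (Section 6): if [m−ρ, m+ρ] is the
unique shortest interval of P-measure ≥ 1/2 and the coverage function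
V(ε,δ) = P[(m+ε)±(ρ+δ)] − 1/2 has expansion c₁δ + c₂ε² + c₃εδ + c₄δ² + o(ε²+δ²)
with c₁ > 0 and c₂ < 0, then for some c > 0 and all small δ > 0,
sup over centers m' of P[m'±(ρ−δ)] is strictly below 1/2 − cδ. -/
theorem stmt_12 (f : ℝ → ℝ) (B : ℝ) (hf0 : ∀ x, 0 ≤ f x) (hfB : ∀ x, f x ≤ B)
    (P : Measure ℝ) (hP : P = volume.withDensity (fun x => ENNReal.ofReal (f x)))
    [IsProbabilityMeasure P]
    (m ρ : ℝ) (hρ : 0 < ρ)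
    (hhalf : ENNReal.ofReal (1 / 2) ≤ P (Set.Icc (m - ρ) (m + ρ)))
    (huniq : ∀ c r : ℝ, 0 ≤ r → ENNReal.ofReal (1 / 2) ≤ P (Set.Icc (c - r) (c + r)) →
      ρ ≤ r ∧ (r = ρ → c = m))
    (V : ℝ → ℝ → ℝ)
    (hVdef : ∀ ε δ : ℝ,
      V ε δ = (P (Set.Icc (m + ε - (ρ + δ)) (m + ε + (ρ + δ)))).toReal - 1 / 2)
    (c₁ c₂ c₃ c₄ : ℝ) (hc₁ : 0 < c₁) (hc₂ : c₂ < 0)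
    (rem : ℝ → ℝ → ℝ)
    (hV : ∀ ε δ : ℝ, V ε δ = c₁ * δ + c₂ * ε ^ 2 + c₃ * ε * δ + c₄ * δ ^ 2 + rem ε δ)
    (ho : ∀ η > (0 : ℝ), ∃ r > (0 : ℝ), ∀ ε δ : ℝ,
      ε ^ 2 + δ ^ 2 < r → |rem ε δ| ≤ η * (ε ^ 2 + δ ^ 2)) :
    ∃ c > (0 : ℝ), ∃ δ₀ > (0 : ℝ), ∀ δ : ℝ, 0 < δ → δ < δ₀ →
      ∀ m' : ℝ, (P (Set.Icc (m' - (ρ - δ)) (m' + (ρ - δ)))).toReal < 1 / 2 - c * δ :=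
  stmt_12_general f B hfB P hP m ρ hρ huniq V hVdef c₁ c₂ c₃ c₄ hc₁ hc₂ rem hV ho
end

section
/- Let f be a density on ℝ, differentiable at the points μ−ρ and μ+ρ, and let V(ε, δ) = ∫_{(μ+ε)−(ρ+δ)}^{(μ+ε)+(ρ+δ)} f(x) dx − ∫_{μ−ρ}^{μ+ρ} f(x) dx. If ε ↦ V(ε, 0) is maximized at ε = 0, then f(μ+ρ) = f(μ−ρ) and f′(μ+ρ) − f′(μ−ρ) ≤ 0. -/
/-!
With Δ(ε) = V(ε, 0) - V(0, 0) = ∫_{μ+ρ}^{μ+ρ+ε} f - ∫_{μ-ρ}^{μ-ρ+ε} f, differentiability of f at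
the two endpoints gives the second-order expansion
Δ(ε) = (f(μ+ρ) - f(μ-ρ)) ε + (f'(μ+ρ) - f'(μ-ρ)) ε² / 2 + o(ε²).
Since Δ is maximal at 0, the linear coefficient vanishes and the quadratic one is nonpositive.
-/

open MeasureTheory intervalIntegral Asymptotics Filter Topology

theorem HasDerivAt.intervalIntegral_sub_taylor_isLittleO {f : ℝ → ℝ} {a d : ℝ}
    (hf : HasDerivAt f d a) (hfi : LocallyIntegrable f) :
    (fun ε => (∫ x in a..a + ε, f x) - (f a * ε + d / 2 * ε ^ 2)) =o[𝓝 0] fun ε => ε ^ 2 := by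
  rw [isLittleO_iff]
  intro c hc
  obtain ⟨δ, hδ, hball⟩ :=
    Metric.eventually_nhds_iff_ball.mp ((hasDerivAt_iff_isLittleO_nhds_zero.mp hf).def hc)
  filter_upwards [Metric.ball_mem_nhds 0 hδ] with ε hε
  have hlin : (∫ h in (0 : ℝ)..ε, (f a + d * h)) = f a * ε + d / 2 * ε ^ 2 := by
    rw [integral_add intervalIntegrable_const ((continuous_const_mul d).intervalIntegrable _ _),
      intervalIntegral.integral_const_mul, intervalIntegral.integral_const, integral_id]
    simp only [smul_eq_mul]
    ring
  have hint : IntervalIntegrable (fun h => f (a + h)) volume 0 ε := by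
    simpa using ((hfi.integrableOn_isCompact isCompact_uIcc).intervalIntegrable
      (a := a) (b := a + ε)).comp_add_left a
  have hshift : (∫ x in a..a + ε, f x) = ∫ h in (0 : ℝ)..ε, f (a + h) := by
    simp [integral_comp_add_left]
  rw [hshift, ← hlin, ← integral_sub hint
    ((by fun_prop : Continuous fun h : ℝ => f a + d * h).intervalIntegrable _ _)]
  have hrem : ∀ h ∈ Set.uIoc 0 ε, ‖f (a + h) - (f a + d * h)‖ ≤ c * |ε| := by
    intro h hh
    have hle : |h| ≤ |ε| := by
      simpa using Set.abs_sub_left_of_mem_uIcc (Set.uIoc_subset_uIcc hh)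
    have hδh : h ∈ Metric.ball 0 δ := by
      rw [Metric.mem_ball, dist_zero_right] at hε ⊢
      exact hle.trans_lt hε
    calc ‖f (a + h) - (f a + d * h)‖ = ‖f (a + h) - f a - h • d‖ := by
          rw [smul_eq_mul, mul_comm h, sub_sub]
      _ ≤ c * |h| := hball h hδh
      _ ≤ c * |ε| := by gcongr
  calc _ ≤ c * |ε| * |ε - 0| := norm_integral_le_of_norm_le_const hrem
    _ = c * ‖ε ^ 2‖ := by simp [sq_abs, mul_assoc, ← sq]

theorem hasDerivAt_of_isLittleO_sq {g : ℝ → ℝ} {a b : ℝ}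
    (hg : (fun ε => g ε - g 0 - (a * ε + b * ε ^ 2)) =o[𝓝 0] fun ε => ε ^ 2) :
    HasDerivAt g a 0 := by
  rw [hasDerivAt_iff_isLittleO_nhds_zero]
  have hsq : (fun ε : ℝ => ε ^ 2) =o[𝓝 0] fun ε => ε := isLittleO_pow_id one_lt_two
  refine ((hg.trans hsq).add (hsq.const_mul_left b)).congr_left fun ε => ?_
  simp only [zero_add, smul_eq_mul]
  ring

theorem IsLocalMax.nonpos_of_isLittleO_sq {g : ℝ → ℝ} {b : ℝ} (hmax : IsLocalMax g 0)
    (hg : (fun ε => g ε - g 0 - b * ε ^ 2) =o[𝓝 0] fun ε => ε ^ 2) : b ≤ 0 := by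
  have hquot : Tendsto (fun ε => (g ε - g 0) / ε ^ 2) (𝓝[≠] 0) (𝓝 b) := by
    have := (hg.tendsto_div_nhds_zero.mono_left (nhdsWithin_le_nhds (s := {0}ᶜ))).add_const b
    rw [zero_add] at this
    refine this.congr' (eventually_nhdsWithin_of_forall fun ε hε => ?_)
    have : ε ≠ 0 := hε
    field_simp
    ring
  refine le_of_tendsto hquot ?_
  filter_upwards [nhdsWithin_le_nhds (s := {0}ᶜ) hmax] with ε hε
  exact div_nonpos_of_nonpos_of_nonneg (sub_nonpos.mpr hε) (sq_nonneg ε)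

theorem IsLocalMax.eq_zero_and_nonpos_of_isLittleO_sq {g : ℝ → ℝ} {a b : ℝ}
    (hmax : IsLocalMax g 0)
    (hg : (fun ε => g ε - g 0 - (a * ε + b * ε ^ 2)) =o[𝓝 0] fun ε => ε ^ 2) :
    a = 0 ∧ b ≤ 0 := by
  obtain rfl : a = 0 := hmax.hasDerivAt_eq_zero (hasDerivAt_of_isLittleO_sq hg)
  exact ⟨rfl, hmax.nonpos_of_isLittleO_sq (by simpa using hg)⟩

theorem stmt_13_general (f : ℝ → ℝ) (hfi : Integrable f) (m ρ : ℝ)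
    (d₁ d₂ : ℝ) (hd₁ : HasDerivAt f d₁ (m - ρ)) (hd₂ : HasDerivAt f d₂ (m + ρ))
    (V : ℝ → ℝ → ℝ)
    (hV : ∀ ε δ : ℝ, V ε δ =
      (∫ x in (m + ε - (ρ + δ))..(m + ε + (ρ + δ)), f x) - ∫ x in (m - ρ)..(m + ρ), f x)
    (hmax : ∀ ε : ℝ, V ε 0 ≤ V 0 0) :
    f (m + ρ) = f (m - ρ) ∧ d₂ - d₁ ≤ 0 := by
  have hshift : ∀ ε, V ε 0 - V 0 0 =
      (∫ x in (m + ρ)..(m + ρ) + ε, f x) - ∫ x in (m - ρ)..(m - ρ) + ε, f x := by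
    intro ε
    simp only [hV, add_zero, sub_sub_sub_cancel_right]
    rw [integral_interval_sub_interval_comm' hfi.intervalIntegrable hfi.intervalIntegrable
      hfi.intervalIntegrable, add_right_comm, add_sub_right_comm]
  have hexp : (fun ε => V ε 0 - V 0 0 -
      ((f (m + ρ) - f (m - ρ)) * ε + (d₂ - d₁) / 2 * ε ^ 2)) =o[𝓝 0] fun ε => ε ^ 2 :=
    ((hd₂.intervalIntegral_sub_taylor_isLittleO hfi.locallyIntegrable).sub
      (hd₁.intervalIntegral_sub_taylor_isLittleO hfi.locallyIntegrable)).congr_left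
      fun ε => by rw [hshift]; ring
  obtain ⟨hfirst, hsecond⟩ :=
    IsLocalMax.eq_zero_and_nonpos_of_isLittleO_sq (Eventually.of_forall hmax) hexp
  exact ⟨sub_eq_zero.mp hfirst, by linarith⟩

/-- Structural fact about the population shorth (Section 6): if f is a density,
differentiable at μ±ρ, and ε ↦ V(ε,0) (the coverage difference of the shifted interval)
is maximized at ε = 0, then f(μ+ρ) = f(μ−ρ) and f′(μ+ρ) − f′(μ−ρ) ≤ 0. -/
theorem stmt_13 (f : ℝ → ℝ) (hf0 : ∀ x, 0 ≤ f x)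
    (hfi : Integrable f) (hf1 : ∫ x, f x = 1)
    (m ρ : ℝ) (hρ : 0 < ρ)
    (d₁ d₂ : ℝ) (hd₁ : HasDerivAt f d₁ (m - ρ)) (hd₂ : HasDerivAt f d₂ (m + ρ))
    (V : ℝ → ℝ → ℝ)
    (hV : ∀ ε δ : ℝ, V ε δ =
      (∫ x in (m + ε - (ρ + δ))..(m + ε + (ρ + δ)), f x) - ∫ x in (m - ρ)..(m + ρ), f x)
    (hmax : ∀ ε : ℝ, V ε 0 ≤ V 0 0) :
    f (m + ρ) = f (m - ρ) ∧ d₂ - d₁ ≤ 0 :=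
  stmt_13_general f hfi m ρ d₁ d₂ hd₁ hd₂ V hV hmax
end

section
/- Let Q be the distribution on ℝ² that concentrates on the lines {x = 1} and {x = −1}, putting mass 1/2 on each, with the y-coordinate on each line following the standard double exponential (Laplace) distribution. Then for the 2-means population criterion W({c₁,c₂}) = E min(‖X − c₁‖², ‖X − c₂‖²), the two configurations C^v = {(−1,0),(1,0)} and C^h = {(0,−1),(0,1)} achieve the same value of W, namely W(C^v) = W(C^h) = 2 (the variance of the double exponential). -/
open MeasureTheory Real Set

lemma aux_int (n : ℕ) : IntegrableOn (fun x : ℝ => x ^ n * Real.exp (-x)) (Ioi 0) := by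
  have := Real.GammaIntegral_convergent (s := (n : ℝ) + 1) (by positivity)
  refine this.congr_fun (fun x hx => ?_) measurableSet_Ioi
  rw [add_sub_cancel_right]; beta_reduce; rw [Real.rpow_natCast, mul_comm]

lemma aux_val (n : ℕ) : ∫ x in Ioi (0:ℝ), x ^ n * Real.exp (-x) = n.factorial := by
  have h := Real.Gamma_eq_integral (s := (n : ℝ) + 1) (by positivity)
  have h2 : Real.Gamma ((n : ℝ) + 1) = n.factorial := Real.Gamma_nat_eq_factorial n
  rw [h2] at h
  rw [h]
  refine setIntegral_congr_fun measurableSet_Ioi (fun x hx => ?_)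
  rw [add_sub_cancel_right, Real.rpow_natCast, mul_comm]

lemma key1 : ∫ y : ℝ, y ^ 2 * (Real.exp (-|y|) / 2) = 2 := by
  have h : (fun y : ℝ => y ^ 2 * (Real.exp (-|y|) / 2))
      = fun y : ℝ => (fun t : ℝ => t ^ 2 * (Real.exp (-t) / 2)) |y| := by
    funext y; simp [sq_abs]
  rw [h, integral_comp_abs (f := fun t : ℝ => t ^ 2 * (Real.exp (-t) / 2))]
  have : ∫ x in Ioi (0:ℝ), x ^ 2 * (Real.exp (-x) / 2)
      = (∫ x in Ioi (0:ℝ), x ^ 2 * Real.exp (-x)) / 2 := by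
    rw [← integral_div]; congr 1; funext x; ring
  rw [this, aux_val 2]; norm_num

lemma key2 : ∫ y : ℝ, (1 + (|y| - 1) ^ 2) * (Real.exp (-|y|) / 2) = 2 := by
  have h : (fun y : ℝ => (1 + (|y| - 1) ^ 2) * (Real.exp (-|y|) / 2))
      = fun y : ℝ => (fun t : ℝ => (1 + (t - 1) ^ 2) * (Real.exp (-t) / 2)) |y| := by
    funext y; simp
  rw [h, integral_comp_abs (f := fun t : ℝ => (1 + (t - 1) ^ 2) * (Real.exp (-t) / 2))]
  have e : ∀ x ∈ Ioi (0:ℝ), (1 + (x - 1) ^ 2) * (Real.exp (-x) / 2)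
      = (x ^ 2 * Real.exp (-x) - 2 * (x ^ 1 * Real.exp (-x)) + 2 * (x ^ 0 * Real.exp (-x))) / 2 := by
    intro x _; ring
  have hB : IntegrableOn (fun x : ℝ => 2 * (x ^ 1 * Real.exp (-x))) (Ioi 0) :=
    (aux_int 1).const_mul 2
  have hC : IntegrableOn (fun x : ℝ => 2 * (x ^ 0 * Real.exp (-x))) (Ioi 0) :=
    (aux_int 0).const_mul 2
  have hA : IntegrableOn (fun x : ℝ => x ^ 2 * Real.exp (-x) - 2 * (x ^ 1 * Real.exp (-x)))
      (Ioi 0) := (aux_int 2).sub hB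
  rw [setIntegral_congr_fun measurableSet_Ioi e, integral_div,
    integral_add hA hC, integral_sub (aux_int 2) hB,
    MeasureTheory.integral_const_mul, MeasureTheory.integral_const_mul, aux_val 0, aux_val 1, aux_val 2]
  norm_num

/-- k-means example (Section 7): for the distribution on ℝ² concentrated on the lines
{x = 1} and {x = −1} with mass 1/2 each and standard double exponential (density
e^{−|y|}/2) conditional distribution along each line, the 2-means population criterion
W({c₁,c₂}) = E min(‖X−c₁‖², ‖X−c₂‖²) takes the same value 2 at the vertical-split
configuration C^v = {(−1,0),(1,0)} and the horizontal-split configuration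
C^h = {(0,−1),(0,1)}. -/
theorem stmt_14 (W : ℝ × ℝ → ℝ × ℝ → ℝ)
    (hW : ∀ c₁ c₂ : ℝ × ℝ, W c₁ c₂ =
      (1 / 2) * (∫ y : ℝ,
          min ((1 - c₁.1) ^ 2 + (y - c₁.2) ^ 2) ((1 - c₂.1) ^ 2 + (y - c₂.2) ^ 2)
            * (Real.exp (-|y|) / 2))
      + (1 / 2) * (∫ y : ℝ,
          min ((-1 - c₁.1) ^ 2 + (y - c₁.2) ^ 2) ((-1 - c₂.1) ^ 2 + (y - c₂.2) ^ 2)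
            * (Real.exp (-|y|) / 2))) :
    W (-1, 0) (1, 0) = 2 ∧ W (0, -1) (0, 1) = 2 := by
  constructor
  · rw [hW]
    show (1 / 2 : ℝ) * (∫ y : ℝ,
          min ((1 - (-1:ℝ)) ^ 2 + (y - (0:ℝ)) ^ 2) ((1 - (1:ℝ)) ^ 2 + (y - (0:ℝ)) ^ 2)
            * (Real.exp (-|y|) / 2))
      + (1 / 2) * (∫ y : ℝ,
          min ((-1 - (-1:ℝ)) ^ 2 + (y - (0:ℝ)) ^ 2) ((-1 - (1:ℝ)) ^ 2 + (y - (0:ℝ)) ^ 2)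
            * (Real.exp (-|y|) / 2)) = 2
    have e1 : (fun y : ℝ => min ((1 - (-1:ℝ)) ^ 2 + (y - (0:ℝ)) ^ 2)
          ((1 - (1:ℝ)) ^ 2 + (y - (0:ℝ)) ^ 2) * (Real.exp (-|y|) / 2))
        = fun y : ℝ => y ^ 2 * (Real.exp (-|y|) / 2) := by
      funext y
      rw [show ((1:ℝ) - (-1)) ^ 2 + (y - 0) ^ 2 = 4 + y ^ 2 by ring,
        show ((1:ℝ) - 1) ^ 2 + (y - 0) ^ 2 = y ^ 2 by ring,
        min_eq_right (by nlinarith)]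
    have e2 : (fun y : ℝ => min ((-1 - (-1:ℝ)) ^ 2 + (y - (0:ℝ)) ^ 2)
          ((-1 - (1:ℝ)) ^ 2 + (y - (0:ℝ)) ^ 2) * (Real.exp (-|y|) / 2))
        = fun y : ℝ => y ^ 2 * (Real.exp (-|y|) / 2) := by
      funext y
      rw [show ((-1:ℝ) - (-1)) ^ 2 + (y - 0) ^ 2 = y ^ 2 by ring,
        show ((-1:ℝ) - 1) ^ 2 + (y - 0) ^ 2 = 4 + y ^ 2 by ring,
        min_eq_left (by nlinarith)]
    rw [e1, e2, key1]; norm_num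
  · rw [hW]
    show (1 / 2 : ℝ) * (∫ y : ℝ,
          min ((1 - (0:ℝ)) ^ 2 + (y - (-1:ℝ)) ^ 2) ((1 - (0:ℝ)) ^ 2 + (y - (1:ℝ)) ^ 2)
            * (Real.exp (-|y|) / 2))
      + (1 / 2) * (∫ y : ℝ,
          min ((-1 - (0:ℝ)) ^ 2 + (y - (-1:ℝ)) ^ 2) ((-1 - (0:ℝ)) ^ 2 + (y - (1:ℝ)) ^ 2)
            * (Real.exp (-|y|) / 2)) = 2
    have e : ∀ s : ℝ, (fun y : ℝ => min ((s - (0:ℝ)) ^ 2 + (y - (-1:ℝ)) ^ 2)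
          ((s - (0:ℝ)) ^ 2 + (y - (1:ℝ)) ^ 2) * (Real.exp (-|y|) / 2))
        = fun y : ℝ => (s ^ 2 + (|y| - 1) ^ 2) * (Real.exp (-|y|) / 2) := by
      intro s; funext y
      rw [show (s - (0:ℝ)) ^ 2 + (y - (-1)) ^ 2 = s ^ 2 + (y + 1) ^ 2 by ring,
        show (s - (0:ℝ)) ^ 2 + (y - 1) ^ 2 = s ^ 2 + (y - 1) ^ 2 by ring]
      rcases abs_cases y with ⟨ha, hy⟩ | ⟨ha, hy⟩
      · rw [min_eq_right (by nlinarith), ha]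
      · rw [min_eq_left (by nlinarith), ha]; ring_nf
    have e1 := e 1
    have e2 := e (-1)
    rw [show ((1:ℝ)) ^ 2 = 1 by norm_num] at e1
    rw [show ((-1:ℝ)) ^ 2 = 1 by norm_num] at e2
    rw [e1, e2, key2]; norm_num
end

section
/- Let G_n(t) = t²·v_n − 2t·x_n + ρ_n(t) where v_n → v > 0, x_n is a bounded real sequence, and sup_{|t| ≤ K} |ρ_n(t)| → 0 for every K > 0. Suppose t_n minimizes G_n over ℝ and (t_n) is bounded. Then t_n − x_n/v_n → 0. -/
open Filter Topology

/-!
Completing the square, `G n t - G n (x n / v n) = v n * (t - x n / v n) ^ 2 + ρ n t - ρ n (x n / v n)`.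
Minimality of `tn n` therefore bounds `v n * (tn n - x n / v n) ^ 2` by `ρ n (x n / v n) - ρ n (tn n)`.
Both points stay in a fixed interval `[-K, K]` (as `v n → v₀ > 0` and `x` is bounded), on which `ρ n → 0`
uniformly, and `v n` stays away from `0`.
-/

lemma quadratic_sub_quadratic_div_eq {v : ℝ} (hv : v ≠ 0) (x t : ℝ) :
    (t ^ 2 * v - 2 * t * x) - ((x / v) ^ 2 * v - 2 * (x / v) * x) = v * (t - x / v) ^ 2 := by
  field_simp
  ring

lemma mul_sq_sub_div_le_of_le {v x t : ℝ} {r : ℝ → ℝ} (hv : v ≠ 0)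
    (hmin : t ^ 2 * v - 2 * t * x + r t ≤ (x / v) ^ 2 * v - 2 * (x / v) * x + r (x / v)) :
    v * (t - x / v) ^ 2 ≤ r (x / v) - r t := by
  linarith [quadratic_sub_quadratic_div_eq hv x t]

section

variable {ι : Type*} {l : Filter ι}

lemma tendsto_apply_zero_of_eventually_abs_le {ρ : ι → ℝ → ℝ}
    (hρ : ∀ K > (0 : ℝ), ∀ ε > (0 : ℝ), ∀ᶠ i in l, ∀ t : ℝ, |t| ≤ K → |ρ i t| < ε)
    {a : ι → ℝ} {K : ℝ} (ha : ∀ᶠ i in l, |a i| ≤ K) :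
    Tendsto (fun i => ρ i (a i)) l (𝓝 0) := by
  rw [Metric.tendsto_nhds]
  intro ε hε
  filter_upwards [ha, hρ (max K 1) (by positivity) ε hε] with i hai hi
  simpa [Real.dist_eq] using hi (a i) (hai.trans (le_max_left _ _))

lemma eventually_abs_div_le {v x : ι → ℝ} {v₀ C : ℝ} (hv₀ : 0 < v₀)
    (hv : Tendsto v l (𝓝 v₀)) (hx : ∀ i, |x i| ≤ C) :
    ∀ᶠ i in l, |x i / v i| ≤ 2 * C / v₀ := by
  filter_upwards [hv.eventually (eventually_gt_nhds (half_lt_self hv₀))] with i hvi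
  have hvi₀ : 0 < v i := (half_pos hv₀).trans hvi
  rw [abs_div, abs_of_pos hvi₀, div_le_div_iff₀ hvi₀ hv₀]
  nlinarith [hx i, abs_nonneg (x i)]

lemma tendsto_zero_of_mul_sq_le {v d r : ι → ℝ} {v₀ : ℝ} (hv₀ : 0 < v₀)
    (hv : Tendsto v l (𝓝 v₀)) (hr : Tendsto r l (𝓝 0)) (hle : ∀ᶠ i in l, v i * d i ^ 2 ≤ r i) :
    Tendsto d l (𝓝 0) := by
  have hvpos : ∀ᶠ i in l, 0 < v i := hv.eventually (eventually_gt_nhds hv₀)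
  have hvd : Tendsto (fun i => v i * d i ^ 2) l (𝓝 0) :=
    squeeze_zero' (hvpos.mono fun i hi => by positivity) hle hr
  have hd₂ : Tendsto (fun i => d i ^ 2) l (𝓝 0) := by
    refine (zero_div v₀ ▸ hvd.div hv hv₀.ne').congr' ?_
    filter_upwards [hvpos] with i hi
    exact mul_div_cancel_left₀ _ hi.ne'
  have habs := hd₂.sqrt
  simp only [Real.sqrt_sq_eq_abs, Real.sqrt_zero] at habs
  exact (tendsto_zero_iff_abs_tendsto_zero d).mpr habs

end

/-- Deterministic argmin step from the partial splines example (Section 8):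
if G_n(t) = t²v_n − 2t x_n + ρ_n(t) with v_n → v > 0, (x_n) bounded,
sup_{|t| ≤ K}|ρ_n(t)| → 0 for every K > 0, and t_n is a bounded sequence of minimizers
of G_n over ℝ, then t_n − x_n/v_n → 0. -/
theorem stmt_18 (G : ℕ → ℝ → ℝ) (v x : ℕ → ℝ) (ρ : ℕ → ℝ → ℝ)
    (hG : ∀ n t, G n t = t ^ 2 * v n - 2 * t * x n + ρ n t)
    (v₀ : ℝ) (hv₀ : 0 < v₀) (hv : Tendsto v atTop (nhds v₀))
    (Cx : ℝ) (hx : ∀ n, |x n| ≤ Cx)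
    (hρ : ∀ K > (0 : ℝ), ∀ ε > (0 : ℝ), ∀ᶠ n in atTop, ∀ t : ℝ, |t| ≤ K → |ρ n t| < ε)
    (tn : ℕ → ℝ) (hmin : ∀ n, ∀ t : ℝ, G n (tn n) ≤ G n t)
    (Ct : ℝ) (htb : ∀ n, |tn n| ≤ Ct) :
    Tendsto (fun n => tn n - x n / v n) atTop (nhds 0) := by
  have hρs := tendsto_apply_zero_of_eventually_abs_le hρ (eventually_abs_div_le hv₀ hv hx)
  have hρt := tendsto_apply_zero_of_eventually_abs_le hρ (Eventually.of_forall htb)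
  refine tendsto_zero_of_mul_sq_le hv₀ hv (by simpa using hρs.sub hρt) ?_
  filter_upwards [hv.eventually (eventually_ne_nhds hv₀.ne')] with n hvn
  exact mul_sq_sub_div_le_of_le hvn (by simpa only [hG] using hmin n (x n / v n))
end
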